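/- arXiv:2304.04047 — 2 statements merged into one kernel-verified Lean document; each statement's English description precedes it below -/
import Mathlib

section
/- Let A be a real symmetric positive definite matrix on ℝ^{d+1} satisfying κ₀ I ≤ A, let ν be a unit vector, ρ ≥ 0 a real number, and β(ξ)² = ⟨Aν,ν⟩⟨Aξ,ξ⟩ − ⟨Aξ,ν⟩² for ξ in the hyperplane ν^⊥ ≅ ℝ^d. Then the d-dimensional volume of the set {ξ ∈ ν^⊥ : β(ξ) < ρ} is at most C·κ₀^{−d}·ω_d·ρ^d for some constant C depending only on d, where ω_d is the volume of the unit ball in ℝ^d. -/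
open Matrix MeasureTheory Pointwise

private theorem steklov_dot_self_nonneg {n : ℕ} (x : Fin n → ℝ) : 0 ≤ x ⬝ᵥ x :=
  Finset.sum_nonneg fun i _ => mul_self_nonneg (x i)

private theorem steklov_key (d : ℕ) (A : Matrix (Fin (d+1)) (Fin (d+1)) ℝ) (κ₀ : ℝ)
    (ν ξ : Fin (d+1) → ℝ) (hκ : 0 < κ₀)
    (hsym : ∀ u v, A.mulVec u ⬝ᵥ v = A.mulVec v ⬝ᵥ u)
    (hell : ∀ w, κ₀ * (w ⬝ᵥ w) ≤ A.mulVec w ⬝ᵥ w)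
    (hν : ν ⬝ᵥ ν = 1) (hperp : ξ ⬝ᵥ ν = 0) :
    κ₀ ^ 2 * (ξ ⬝ᵥ ξ) ≤ (A.mulVec ν ⬝ᵥ ν) * (A.mulVec ξ ⬝ᵥ ξ) - (A.mulVec ξ ⬝ᵥ ν) ^ 2 := by
  set a := A.mulVec ν ⬝ᵥ ν with ha_def
  set s := A.mulVec ξ ⬝ᵥ ν with hs_def
  set q := A.mulVec ξ ⬝ᵥ ξ with hq_def
  have ha : κ₀ ≤ a := by have := hell ν; rw [hν] at this; linarith
  have ha0 : 0 < a := lt_of_lt_of_le hκ ha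
  set t := s / a with ht_def
  have hane : a ≠ 0 := ne_of_gt ha0
  have hts : a * t = s := by rw [ht_def]; field_simp
  have hX : 0 ≤ ξ ⬝ᵥ ξ := steklov_dot_self_nonneg ξ
  have h1 := hell (ξ - t • ν)
  have hexp1 : (ξ - t • ν) ⬝ᵥ (ξ - t • ν) = ξ ⬝ᵥ ξ + t ^ 2 := by
    simp [sub_dotProduct, dotProduct_sub, smul_dotProduct, dotProduct_smul,
      dotProduct_comm ν ξ, hperp, hν, smul_eq_mul]
    ring
  have hexp2 : A.mulVec (ξ - t • ν) ⬝ᵥ (ξ - t • ν) = q - 2 * t * s + t ^ 2 * a := by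
    simp [Matrix.mulVec_sub, Matrix.mulVec_smul, sub_dotProduct, dotProduct_sub,
      smul_dotProduct, dotProduct_smul, smul_eq_mul, hsym ν ξ]
    ring
  rw [hexp1, hexp2] at h1
  nlinarith [sq_nonneg t, mul_le_mul_of_nonneg_left h1 (le_of_lt ha0), sq_nonneg (a*t - s),
    mul_nonneg (mul_nonneg hκ.le hκ.le) hX, mul_le_mul_of_nonneg_right ha hX,
    mul_nonneg (mul_nonneg ha0.le hκ.le) (sq_nonneg t)]

/-- For a uniformly elliptic symmetric matrix `A ≥ κ₀ I` and unit vector `ν`, the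
`d`-dimensional volume of the sublevel set `{ξ ∈ ν^⊥ : β(ξ) < ρ}` of
`β(ξ) = (⟨Aν,ν⟩⟨Aξ,ξ⟩ − ⟨Aξ,ν⟩²)^{1/2}` is at most `C κ₀^{-d} ω_d ρ^d`, where
`ω_d` is the volume of the unit ball in `ℝ^d` and `C` depends only on `d`.
The hyperplane `ν^⊥` is parametrized by a linear isometry `φ : ℝ^d → ℝ^{d+1}`
with range `ν^⊥`. -/
theorem steklov_sublevel_volume_bound (d : ℕ) :
    ∃ C : ℝ, 0 < C ∧
      ∀ (A : Matrix (Fin (d + 1)) (Fin (d + 1)) ℝ) (κ₀ : ℝ) (ν : Fin (d + 1) → ℝ)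
        (ρ : ℝ) (φ : (Fin d → ℝ) →ₗ[ℝ] (Fin (d + 1) → ℝ)),
        A.PosDef → 0 < κ₀ →
        (∀ ξ : Fin (d + 1) → ℝ, κ₀ * (ξ ⬝ᵥ ξ) ≤ A.mulVec ξ ⬝ᵥ ξ) →
        ν ⬝ᵥ ν = 1 → 0 ≤ ρ →
        (∀ x : Fin d → ℝ, φ x ⬝ᵥ φ x = x ⬝ᵥ x) →
        (∀ x : Fin d → ℝ, φ x ⬝ᵥ ν = 0) →
        (∀ w : Fin (d + 1) → ℝ, w ⬝ᵥ ν = 0 → ∃ x, φ x = w) →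
        volume {x : Fin d → ℝ |
            Real.sqrt ((A.mulVec ν ⬝ᵥ ν) * (A.mulVec (φ x) ⬝ᵥ φ x)
              - (A.mulVec (φ x) ⬝ᵥ ν) ^ 2) < ρ} ≤
          ENNReal.ofReal (C * (κ₀ ^ d)⁻¹ * ρ ^ d) *
            volume {x : Fin d → ℝ | x ⬝ᵥ x < 1} := by
  refine ⟨1, one_pos, ?_⟩
  intro A κ₀ ν ρ φ hA hκ hell hν hρ hiso hperp _hsurj
  have hsym : ∀ u v, A.mulVec u ⬝ᵥ v = A.mulVec v ⬝ᵥ u := by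
    intro u v
    have h : Aᵀ = A := (by simpa using hA.isHermitian : A.IsSymm)
    rw [dotProduct_comm, dotProduct_mulVec, ← mulVec_transpose, h]
  rcases eq_or_lt_of_le hρ with hρ0 | hρ0
  · -- ρ = 0 : the set is empty
    have hempty : {x : Fin d → ℝ |
        Real.sqrt ((A.mulVec ν ⬝ᵥ ν) * (A.mulVec (φ x) ⬝ᵥ φ x)
          - (A.mulVec (φ x) ⬝ᵥ ν) ^ 2) < ρ} = ∅ := by
      ext x
      simp only [Set.mem_setOf_eq, Set.mem_empty_iff_false, iff_false, not_lt, ← hρ0]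
      exact Real.sqrt_nonneg _
    rw [hempty]
    simp
  · -- ρ > 0
    set r : ℝ := ρ / κ₀ with hr_def
    have hr0 : 0 < r := div_pos hρ0 hκ
    set U : Set (Fin d → ℝ) := {x | x ⬝ᵥ x < 1} with hU_def
    have hsub : {x : Fin d → ℝ |
        Real.sqrt ((A.mulVec ν ⬝ᵥ ν) * (A.mulVec (φ x) ⬝ᵥ φ x)
          - (A.mulVec (φ x) ⬝ᵥ ν) ^ 2) < ρ} ⊆ r • U := by
      intro x hx
      simp only [Set.mem_setOf_eq] at hx
      have hlt : (A.mulVec ν ⬝ᵥ ν) * (A.mulVec (φ x) ⬝ᵥ φ x)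
          - (A.mulVec (φ x) ⬝ᵥ ν) ^ 2 < ρ ^ 2 := (Real.sqrt_lt' hρ0).mp hx
      have hkey := steklov_key d A κ₀ ν (φ x) hκ hsym hell hν (hperp x)
      have hxx : κ₀ ^ 2 * (x ⬝ᵥ x) < ρ ^ 2 := by
        rw [← hiso x]; linarith
      have hxr : x ⬝ᵥ x < r ^ 2 := by
        rw [hr_def, div_pow]
        rw [lt_div_iff₀ (by positivity)]
        linarith [hxx]
      rw [Set.mem_smul_set_iff_inv_smul_mem₀ (ne_of_gt hr0)]
      simp only [hU_def, Set.mem_setOf_eq, smul_dotProduct, dotProduct_smul, smul_eq_mul]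
      have hX : 0 ≤ x ⬝ᵥ x := steklov_dot_self_nonneg x
      have h1 : r⁻¹ * (r⁻¹ * (x ⬝ᵥ x)) < r⁻¹ * (r⁻¹ * r ^ 2) := by
        have hri : 0 < r⁻¹ := inv_pos.mpr hr0
        exact mul_lt_mul_of_pos_left (mul_lt_mul_of_pos_left hxr hri) hri
      have h2 : r⁻¹ * (r⁻¹ * r ^ 2) = 1 := by
        field_simp
      linarith
    calc volume {x : Fin d → ℝ |
            Real.sqrt ((A.mulVec ν ⬝ᵥ ν) * (A.mulVec (φ x) ⬝ᵥ φ x)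
              - (A.mulVec (φ x) ⬝ᵥ ν) ^ 2) < ρ}
        ≤ volume (r • U) := measure_mono hsub
      _ = ENNReal.ofReal (|r ^ Module.finrank ℝ (Fin d → ℝ)|) * volume U :=
          Measure.addHaar_smul volume r U
      _ = ENNReal.ofReal (1 * (κ₀ ^ d)⁻¹ * ρ ^ d) * volume U := by
          congr 1
          rw [abs_of_pos (by positivity)]
          simp only [Module.finrank_fintype_fun_eq_card, Fintype.card_fin]
          rw [hr_def, div_pow]
          ring
end

section
/- (Asymptotic perturbation lemma of Birman–Solomyak.) Let K be a compact operator on a Hilbert space and θ > 0. Suppose for each ε > 0 there is a splitting K = K_ε + K'_ε such that lim_{λ→0} λ^θ n(λ, K_ε) = A_ε exists, and limsup_{λ→0} λ^θ n(λ, K'_ε) → 0 as ε → 0, where n(λ,·) counts singular values exceeding λ. Then the limit A = lim_{ε→0} A_ε exists and lim_{λ→0} λ^θ n(λ, K) = A. -/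
open Filter Topology ENNReal

variable {H : Type*} [NormedAddCommGroup H] [InnerProductSpace ℂ H] [CompleteSpace H]

/-- The `n`-th approximation number of a bounded operator `K`: the distance from
`K` to the operators of rank at most `n`.  For a compact operator this equals the
`(n+1)`-st singular value `s_{n+1}(K)`. -/
noncomputable def approxNum (K : H →L[ℂ] H) (n : ℕ) : ℝ :=
  sInf {c : ℝ | ∃ F : H →L[ℂ] H, LinearMap.rank (F : H →ₗ[ℂ] H) ≤ (n : Cardinal) ∧ c = ‖K - F‖}

/-- The singular value counting function `n(λ, K)`: the number of singular values
of `K` exceeding `λ`. -/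
noncomputable def svCount (K : H →L[ℂ] H) (lam : ℝ) : ℕ :=
  sInf {n : ℕ | approxNum K n ≤ lam}

set_option linter.unusedSectionVars false
set_option linter.unusedVariables false
set_option maxHeartbeats 2000000

lemma approxSet_nonempty (K : H →L[ℂ] H) (n : ℕ) :
    {c : ℝ | ∃ F : H →L[ℂ] H, LinearMap.rank (F : H →ₗ[ℂ] H) ≤ (n : Cardinal) ∧ c = ‖K - F‖}.Nonempty := by
  refine ⟨‖K - 0‖, 0, ?_, rfl⟩
  simp [LinearMap.rank]

lemma approxSet_bddBelow (K : H →L[ℂ] H) (n : ℕ) :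
    BddBelow {c : ℝ | ∃ F : H →L[ℂ] H, LinearMap.rank (F : H →ₗ[ℂ] H) ≤ (n : Cardinal) ∧ c = ‖K - F‖} := by
  refine ⟨0, fun c hc => ?_⟩
  obtain ⟨F, -, rfl⟩ := hc
  positivity

lemma approxNum_le (K F : H →L[ℂ] H) (n : ℕ)
    (hF : LinearMap.rank (F : H →ₗ[ℂ] H) ≤ (n : Cardinal)) : approxNum K n ≤ ‖K - F‖ :=
  csInf_le (approxSet_bddBelow K n) ⟨F, hF, rfl⟩

lemma approxNum_add (S T : H →L[ℂ] H) (m n : ℕ) :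
    approxNum (S + T) (m + n) ≤ approxNum S m + approxNum T n := by
  refine le_of_forall_pos_le_add (fun η hη => ?_)
  obtain ⟨c, ⟨F, hF, rfl⟩, hcF⟩ := exists_lt_of_csInf_lt (approxSet_nonempty S m)
    (show sInf _ < approxNum S m + η/2 by unfold approxNum; linarith)
  obtain ⟨d, ⟨G, hG, rfl⟩, hdG⟩ := exists_lt_of_csInf_lt (approxSet_nonempty T n)
    (show sInf _ < approxNum T n + η/2 by unfold approxNum; linarith)
  have hrk : LinearMap.rank ((F + G : H →L[ℂ] H) : H →ₗ[ℂ] H) ≤ ((m + n : ℕ) : Cardinal) := by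
    have : ((F + G : H →L[ℂ] H) : H →ₗ[ℂ] H) = (F : H →ₗ[ℂ] H) + G := rfl
    rw [this, Nat.cast_add]
    exact le_trans (LinearMap.rank_add_le _ _) (add_le_add hF hG)
  calc approxNum (S + T) (m + n) ≤ ‖(S + T) - (F + G)‖ := approxNum_le _ _ _ hrk
    _ ≤ ‖S - F‖ + ‖T - G‖ := by
        have : (S + T) - (F + G) = (S - F) + (T - G) := by abel
        rw [this]; exact norm_add_le _ _
    _ ≤ approxNum S m + approxNum T n + η := by linarith

lemma approxNum_neg (K : H →L[ℂ] H) (n : ℕ) : approxNum (-K) n = approxNum K n := by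
  have key : ∀ (K F : H →L[ℂ] H), LinearMap.rank (F : H →ₗ[ℂ] H) ≤ (n : Cardinal) →
      approxNum (-K) n ≤ ‖K - F‖ := by
    intro K F hF
    have h1 : ‖K - F‖ = ‖-K - (-F)‖ := by rw [← norm_neg]; congr 1; abel
    rw [h1]
    refine approxNum_le _ _ _ ?_
    have h2 : ((-F : H →L[ℂ] H) : H →ₗ[ℂ] H) = -(F : H →ₗ[ℂ] H) := rfl
    rw [h2, LinearMap.rank, LinearMap.range_neg]
    exact hF
  have le1 : ∀ K : H →L[ℂ] H, approxNum (-K) n ≤ approxNum K n := by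
    intro K
    refine le_csInf (approxSet_nonempty K n) ?_
    rintro c ⟨F, hF, rfl⟩
    exact key K F hF
  refine le_antisymm (le1 K) ?_
  have := le1 (-K)
  rwa [neg_neg] at this

lemma exists_approxNum_le (K : H →L[ℂ] H) (hK : IsCompactOperator K) {lam : ℝ} (hlam : 0 < lam) :
    ∃ n : ℕ, approxNum K n ≤ lam := by
  have hK' : IsCompactOperator ⇑(K : H →ₗ[ℂ] H) := by
    rwa [ContinuousLinearMap.coe_coe]
  have hcpt : IsCompact (closure (⇑K '' Metric.closedBall 0 1)) := by
    simpa using hK'.isCompact_closure_image_closedBall 1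
  have htb : TotallyBounded (⇑K '' Metric.closedBall 0 1) :=
    (hcpt.totallyBounded).subset subset_closure
  obtain ⟨t, htfin, htsub⟩ := (Metric.totallyBounded_iff.mp htb) lam hlam
  set U : Submodule ℂ H := Submodule.span ℂ t with hU
  haveI : FiniteDimensional ℂ U := FiniteDimensional.span_of_finite ℂ htfin
  haveI : CompleteSpace U := FiniteDimensional.complete ℂ U
  set P : H →L[ℂ] H := U.subtypeL.comp (U.orthogonalProjectionOnto) with hP
  set F : H →L[ℂ] H := P.comp K with hF
  refine ⟨Module.finrank ℂ U, ?_⟩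
  have hrk : LinearMap.rank (F : H →ₗ[ℂ] H) ≤ (Module.finrank ℂ U : Cardinal) := by
    have hrange : LinearMap.range (F : H →ₗ[ℂ] H) ≤ U := by
      rintro y ⟨x, rfl⟩
      exact (U.orthogonalProjectionOnto (K x)).2
    calc LinearMap.rank (F : H →ₗ[ℂ] H) ≤ Module.rank ℂ U := Submodule.rank_mono hrange
      _ = (Module.finrank ℂ U : Cardinal) := (Module.finrank_eq_rank ℂ U).symm
  refine le_trans (approxNum_le K F _ hrk) ?_
  -- norm bound
  refine ContinuousLinearMap.opNorm_le_bound _ hlam.le (fun x => ?_)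
  rcases eq_or_ne x 0 with rfl | hx
  · simp
  have hxn : (0:ℝ) < ‖x‖ := norm_pos_iff.mpr hx
  set y : H := (‖x‖⁻¹ : ℝ) • x with hy
  have hyn : ‖y‖ = 1 := by
    rw [hy, norm_smul]
    simp [abs_of_pos (inv_pos.mpr hxn), inv_mul_cancel₀ hxn.ne']
  have hmem : K y ∈ ⇑K '' Metric.closedBall 0 1 :=
    ⟨y, by simpa [Metric.mem_closedBall, dist_zero_right] using hyn.le, rfl⟩
  obtain ⟨z, hzt, hz⟩ := Set.mem_iUnion₂.mp (htsub hmem)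
  have hzU : z ∈ U := Submodule.subset_span hzt
  have hmin : ‖K y - P (K y)‖ ≤ ‖K y - z‖ := by
    have h1 : ‖K y - P (K y)‖ = ⨅ w : U, ‖K y - w‖ := Submodule.starProjection_minimal (U := U) (K y)
    rw [h1]
    exact ciInf_le ⟨0, by rintro c ⟨w, rfl⟩; positivity⟩ (⟨z, hzU⟩ : U)
  have hylt : ‖(K - F) y‖ ≤ lam := by
    have : (K - F) y = K y - P (K y) := by simp [hF]
    rw [this]
    refine le_trans hmin ?_
    rw [Metric.mem_ball, dist_eq_norm] at hz
    exact hz.le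
  have hxy : x = (‖x‖ : ℝ) • y := by
    rw [hy, smul_smul, mul_inv_cancel₀ hxn.ne', one_smul]
  calc ‖(K - F) x‖ = ‖(K - F) ((‖x‖ : ℝ) • y)‖ := by rw [← hxy]
    _ = ‖x‖ * ‖(K - F) y‖ := by
        rw [ContinuousLinearMap.map_smul_of_tower, norm_smul, Real.norm_eq_abs, abs_of_pos hxn]
    _ ≤ ‖x‖ * lam := by nlinarith [norm_nonneg ((K - F) y)]
    _ = lam * ‖x‖ := mul_comm _ _

lemma approxNum_svCount_le (K : H →L[ℂ] H) (hK : IsCompactOperator K) {lam : ℝ}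
    (hlam : 0 < lam) : approxNum K (svCount K lam) ≤ lam := by
  have hne : {n : ℕ | approxNum K n ≤ lam}.Nonempty := exists_approxNum_le K hK hlam
  exact Nat.sInf_mem hne

lemma svCount_add (S T : H →L[ℂ] H) (hS : IsCompactOperator S) (hT : IsCompactOperator T)
    {lam mu : ℝ} (hlam : 0 < lam) (hmu : 0 < mu) :
    svCount (S + T) (lam + mu) ≤ svCount S lam + svCount T mu := by
  refine Nat.sInf_le ?_
  exact le_trans (approxNum_add S T _ _)
    (add_le_add (approxNum_svCount_le S hS hlam) (approxNum_svCount_le T hT hmu))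

lemma svCount_neg (K : H →L[ℂ] H) (lam : ℝ) : svCount (-K) lam = svCount K lam := by
  unfold svCount
  congr 1
  ext n
  simp [approxNum_neg]

lemma key_ineq (S T : H →L[ℂ] H) (hS : IsCompactOperator S) (hT : IsCompactOperator T)
    {θ : ℝ} (hθ : 0 < θ) {δ lam : ℝ} (hδ0 : 0 < δ) (hδ1 : δ < 1) (hlam : 0 < lam) :
    lam ^ θ * (svCount (S + T) lam : ℝ) ≤
      (1 - δ) ^ (-θ) * (((1 - δ) * lam) ^ θ * (svCount S ((1 - δ) * lam) : ℝ))
      + δ ^ (-θ) * ((δ * lam) ^ θ * (svCount T (δ * lam) : ℝ)) := by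
  have h1 : (0:ℝ) < 1 - δ := by linarith
  have hc : (svCount (S + T) lam : ℝ) ≤
      (svCount S ((1 - δ) * lam) : ℝ) + (svCount T (δ * lam) : ℝ) := by
    have heq : lam = (1 - δ) * lam + δ * lam := by ring
    have := svCount_add S T hS hT (mul_pos h1 hlam) (mul_pos hδ0 hlam)
    rw [← heq] at this
    exact_mod_cast this
  have e1 : (1 - δ) ^ (-θ) * ((1 - δ) * lam) ^ θ = lam ^ θ := by
    rw [Real.mul_rpow h1.le hlam.le, Real.rpow_neg h1.le, ← mul_assoc,
      inv_mul_cancel₀ (ne_of_gt (Real.rpow_pos_of_pos h1 θ)), one_mul]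
  have e2 : δ ^ (-θ) * (δ * lam) ^ θ = lam ^ θ := by
    rw [Real.mul_rpow hδ0.le hlam.le, Real.rpow_neg hδ0.le, ← mul_assoc,
      inv_mul_cancel₀ (ne_of_gt (Real.rpow_pos_of_pos hδ0 θ)), one_mul]
  have hpow : (0:ℝ) < lam ^ θ := Real.rpow_pos_of_pos hlam θ
  calc lam ^ θ * (svCount (S + T) lam : ℝ)
      ≤ lam ^ θ * ((svCount S ((1 - δ) * lam) : ℝ) + (svCount T (δ * lam) : ℝ)) :=
        mul_le_mul_of_nonneg_left hc hpow.le
    _ = (1 - δ) ^ (-θ) * (((1 - δ) * lam) ^ θ * (svCount S ((1 - δ) * lam) : ℝ))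
      + δ ^ (-θ) * ((δ * lam) ^ θ * (svCount T (δ * lam) : ℝ)) := by
        rw [← mul_assoc, ← mul_assoc, e1, e2]; ring

/-- Birman–Solomyak asymptotic perturbation lemma: if for each `ε > 0` the compact
operator `K` splits as `K = Kε + K'ε` where `λ^θ n(λ, Kε) → Aε` as `λ → 0⁺` and
`limsup_{λ→0} λ^θ n(λ, K'ε) → 0` as `ε → 0⁺`, then `A = lim Aε` exists and
`λ^θ n(λ, K) → A`. -/
theorem birman_solomyak_perturbation (K : H →L[ℂ] H) (hK : IsCompactOperator K)
    (θ : ℝ) (hθ : 0 < θ)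
    (Ke Ke' : ℝ → (H →L[ℂ] H)) (A : ℝ → ℝ)
    (hcpt : ∀ ε > (0 : ℝ), IsCompactOperator (Ke ε) ∧ IsCompactOperator (Ke' ε))
    (hsplit : ∀ ε > (0 : ℝ), K = Ke ε + Ke' ε)
    (hmain : ∀ ε > (0 : ℝ),
      Tendsto (fun lam : ℝ => lam ^ θ * (svCount (Ke ε) lam : ℝ)) (𝓝[>] (0 : ℝ))
        (𝓝 (A ε)))
    (hrem : Tendsto
      (fun ε : ℝ => limsup
        (fun lam : ℝ => ENNReal.ofReal (lam ^ θ) * (svCount (Ke' ε) lam : ℝ≥0∞))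
        (𝓝[>] (0 : ℝ)))
      (𝓝[>] (0 : ℝ)) (𝓝 0)) :
    ∃ Alim : ℝ, Tendsto A (𝓝[>] (0 : ℝ)) (𝓝 Alim) ∧
      Tendsto (fun lam : ℝ => lam ^ θ * (svCount K lam : ℝ)) (𝓝[>] (0 : ℝ)) (𝓝 Alim) := by
  set l : Filter ℝ := 𝓝[>] (0 : ℝ) with hl
  set f : ℝ → ℝ := fun lam => lam ^ θ * (svCount K lam : ℝ) with hfdef
  set fe : ℝ → ℝ → ℝ := fun ε lam => lam ^ θ * (svCount (Ke ε) lam : ℝ) with hfedef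
  set g : ℝ → ℝ → ℝ := fun ε lam => lam ^ θ * (svCount (Ke' ε) lam : ℝ) with hgdef
  have hmain' : ∀ ε, 0 < ε → Tendsto (fe ε) l (𝓝 (A ε)) := fun ε hε => hmain ε hε
  -- scaling of eventual statements
  have hscale : ∀ (c : ℝ), 0 < c → ∀ (P : ℝ → Prop),
      (∀ᶠ lam in l, P lam) → ∀ᶠ lam in l, P (c * lam) := by
    intro c hc P hP
    have ht : Tendsto (fun lam : ℝ => c * lam) l l := by
      apply tendsto_nhdsWithin_of_tendsto_nhds_of_eventually_within
      · have h2 : Tendsto (fun lam : ℝ => c * lam) (𝓝 0) (𝓝 (c * 0)) :=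
          (continuous_mul_left c).tendsto 0
        rw [mul_zero] at h2
        exact h2.mono_left nhdsWithin_le_nhds
      · filter_upwards [self_mem_nhdsWithin] with lam hlam
        exact mul_pos hc hlam
    exact ht.eventually hP
  -- extraction of real remainder bounds
  have hrem' : ∀ η : ℝ, 0 < η → ∀ᶠ ε in l, ∀ᶠ lam in l, g ε lam < η := by
    intro η hη
    have h2 := ENNReal.tendsto_nhds_zero.mp hrem (ENNReal.ofReal (η / 2))
      (ENNReal.ofReal_pos.mpr (by linarith))
    filter_upwards [h2] with ε hε
    have hlt : limsup
        (fun lam : ℝ => ENNReal.ofReal (lam ^ θ) * (svCount (Ke' ε) lam : ℝ≥0∞)) l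
        < ENNReal.ofReal η :=
      lt_of_le_of_lt hε ((ENNReal.ofReal_lt_ofReal_iff hη).mpr (by linarith))
    filter_upwards [eventually_lt_of_limsup_lt hlt, self_mem_nhdsWithin] with lam hlam hpos
    have hnn : 0 ≤ lam ^ θ := (Real.rpow_pos_of_pos hpos θ).le
    rw [← ENNReal.ofReal_natCast, ← ENNReal.ofReal_mul hnn] at hlam
    exact (ENNReal.ofReal_lt_ofReal_iff hη).mp hlam
  -- nonnegativity of A
  have hA0 : ∀ᶠ ε in l, 0 ≤ A ε := by
    filter_upwards [self_mem_nhdsWithin] with ε hε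
    refine ge_of_tendsto (hmain' ε hε) ?_
    filter_upwards [self_mem_nhdsWithin] with lam hlam
    have : (0:ℝ) ≤ lam ^ θ := (Real.rpow_pos_of_pos hlam θ).le
    positivity
  -- choose ε₀ with small remainder
  obtain ⟨ε₀, hε₀g, hε₀pos⟩ := ((hrem' 1 one_pos).and self_mem_nhdsWithin).exists
  have hε₀pos : (0:ℝ) < ε₀ := hε₀pos
  have hA₀0 : 0 ≤ A ε₀ := by
    refine ge_of_tendsto (hmain' ε₀ hε₀pos) ?_
    filter_upwards [self_mem_nhdsWithin] with lam hlam
    have : (0:ℝ) ≤ lam ^ θ := (Real.rpow_pos_of_pos hlam θ).le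
    positivity
  have h12 : (0:ℝ) < 2⁻¹ := by norm_num
  have h12' : (2:ℝ)⁻¹ < 1 := by norm_num
  have h12'' : (0:ℝ) < 1 - 2⁻¹ := by norm_num
  have hpw : ((2:ℝ)⁻¹) ^ (-θ) = 2 ^ θ := by
    rw [Real.inv_rpow (by norm_num), ← Real.rpow_neg (by norm_num), neg_neg]
  have hpw' : ((1:ℝ) - 2⁻¹) ^ (-θ) = 2 ^ θ := by rw [show (1:ℝ) - 2⁻¹ = 2⁻¹ by norm_num, hpw]
  have h2pow : (0:ℝ) < 2 ^ θ := Real.rpow_pos_of_pos (by norm_num) θ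
  set M : ℝ := 2 ^ θ * (A ε₀ + 2) with hMdef
  have hMpos : 0 < M := by
    apply mul_pos h2pow; linarith
  -- uniform eventual bound on f
  have hM : ∀ᶠ lam in l, f lam ≤ M := by
    have hfe : ∀ᶠ lam in l, fe ε₀ lam < A ε₀ + 1 :=
      (hmain' ε₀ hε₀pos).eventually_lt_const (by linarith)
    have hfe2 : ∀ᶠ lam in l, fe ε₀ ((1 - 2⁻¹) * lam) < A ε₀ + 1 := hscale _ h12'' _ hfe
    have hg2 : ∀ᶠ lam in l, g ε₀ (2⁻¹ * lam) < 1 := hscale _ h12 _ hε₀g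
    filter_upwards [hfe2, hg2, self_mem_nhdsWithin] with lam h1 h2 hpos
    have hk := key_ineq (Ke ε₀) (Ke' ε₀) (hcpt ε₀ hε₀pos).1 (hcpt ε₀ hε₀pos).2 hθ h12 h12' hpos
    rw [← hsplit ε₀ hε₀pos, hpw, hpw'] at hk
    have e1 : ((1 - 2⁻¹) * lam) ^ θ * (svCount (Ke ε₀) ((1 - 2⁻¹) * lam) : ℝ)
        = fe ε₀ ((1 - 2⁻¹) * lam) := rfl
    have e2 : ((2⁻¹ : ℝ) * lam) ^ θ * (svCount (Ke' ε₀) (2⁻¹ * lam) : ℝ)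
        = g ε₀ (2⁻¹ * lam) := rfl
    rw [e1, e2, show lam ^ θ * (svCount K lam : ℝ) = f lam from rfl] at hk
    have : f lam ≤ 2 ^ θ * (A ε₀ + 1) + 2 ^ θ * 1 := by
      have b1 := mul_le_mul_of_nonneg_left h1.le h2pow.le
      have b2 := mul_le_mul_of_nonneg_left h2.le h2pow.le
      linarith
    calc f lam ≤ 2 ^ θ * (A ε₀ + 1) + 2 ^ θ * 1 := this
      _ = M := by rw [hMdef]; ring
  -- uniform eventual bound on A
  set M' : ℝ := 2 ^ θ * (M + 1) with hM'def
  have hM'pos : 0 < M' := mul_pos h2pow (by linarith)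
  have hM' : ∀ᶠ ε in l, A ε ≤ M' := by
    filter_upwards [hrem' 1 one_pos, self_mem_nhdsWithin] with ε hgε hεpos
    refine le_of_tendsto (hmain' ε hεpos) ?_
    have hf2 : ∀ᶠ lam in l, f ((1 - 2⁻¹) * lam) ≤ M := hscale _ h12'' _ hM
    have hg2 : ∀ᶠ lam in l, g ε (2⁻¹ * lam) < 1 := hscale _ h12 _ hgε
    filter_upwards [hf2, hg2, self_mem_nhdsWithin] with lam h1 h2 hpos
    have hsum : K + -(Ke' ε) = Ke ε := by rw [hsplit ε hεpos]; abel
    have hk := key_ineq K (-(Ke' ε)) hK ((hcpt ε hεpos).2.neg) hθ h12 h12' hpos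
    rw [hsum, svCount_neg, hpw, hpw'] at hk
    have e1 : ((1 - 2⁻¹) * lam) ^ θ * (svCount K ((1 - 2⁻¹) * lam) : ℝ)
        = f ((1 - 2⁻¹) * lam) := rfl
    have e2 : ((2⁻¹ : ℝ) * lam) ^ θ * (svCount (Ke' ε) (2⁻¹ * lam) : ℝ)
        = g ε (2⁻¹ * lam) := rfl
    rw [e1, e2, show lam ^ θ * (svCount (Ke ε) lam : ℝ) = fe ε lam from rfl] at hk
    have : fe ε lam ≤ 2 ^ θ * M + 2 ^ θ * 1 := by
      have b1 := mul_le_mul_of_nonneg_left h1 h2pow.le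
      have b2 := mul_le_mul_of_nonneg_left h2.le h2pow.le
      linarith
    calc fe ε lam ≤ 2 ^ θ * M + 2 ^ θ * 1 := this
      _ = M' := by rw [hM'def]; ring
  set B : ℝ := M' + 1 with hBdef
  have hB1 : (1:ℝ) ≤ B := by linarith
  have hBpos : (0:ℝ) < B := by linarith
  -- the main claim
  have claim : ∀ η : ℝ, 0 < η → ∀ᶠ ε in l, ∀ᶠ lam in l, |f lam - A ε| ≤ η := by
    intro η₀ hη₀
    set η := min η₀ 1 with hηdef
    have hη : 0 < η := lt_min hη₀ one_pos
    have hη1 : η ≤ 1 := min_le_right _ _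
    suffices hsuf : ∀ᶠ ε in l, ∀ᶠ lam in l, |f lam - A ε| ≤ η by
      exact hsuf.mono fun ε hε => hε.mono fun lam h => h.trans (min_le_left _ _)
    set η₁ := η / (4 * B) with hη₁def
    have hη₁pos : 0 < η₁ := by apply div_pos hη; linarith
    have hη₁B : η₁ * B = η / 4 := by
      rw [hη₁def]; field_simp
    -- choose δ
    have hcont : Tendsto (fun δ : ℝ => (1 - δ) ^ θ) l (𝓝 1) := by
      have h1 : ContinuousAt (fun x : ℝ => x ^ θ) 1 :=
        Real.continuousAt_rpow_const 1 θ (Or.inl one_ne_zero)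
      have h2 : Tendsto (fun δ : ℝ => 1 - δ) l (𝓝 1) := by
        have h3 : Tendsto (fun δ : ℝ => 1 - δ) (𝓝 (0:ℝ)) (𝓝 (1 - 0)) :=
          (continuous_const.sub continuous_id).tendsto (0:ℝ)
        rw [sub_zero] at h3
        exact h3.mono_left nhdsWithin_le_nhds
      have := h1.tendsto.comp h2
      simpa [Real.one_rpow, Function.comp_def] using this
    have hconti : Tendsto (fun δ : ℝ => ((1 - δ) ^ θ)⁻¹) l (𝓝 1) := by
      have := hcont.inv₀ one_ne_zero
      simpa using this
    have hev1 : ∀ᶠ δ : ℝ in l, |(1 - δ) ^ θ - 1| < η₁ := by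
      have := Metric.tendsto_nhds.mp hcont η₁ hη₁pos
      simpa [Real.dist_eq] using this
    have hev2 : ∀ᶠ δ : ℝ in l, |((1 - δ) ^ θ)⁻¹ - 1| < η₁ := by
      have := Metric.tendsto_nhds.mp hconti η₁ hη₁pos
      simpa [Real.dist_eq] using this
    have hev3 : ∀ᶠ δ : ℝ in l, δ < 1 :=
      (gt_mem_nhds (show (0:ℝ) < 1 by norm_num)).filter_mono nhdsWithin_le_nhds
    obtain ⟨δ, ⟨⟨hδc, hδci⟩, hδ1⟩, hδpos⟩ :=
      (((hev1.and hev2).and hev3).and self_mem_nhdsWithin).exists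
    have hδpos : (0:ℝ) < δ := hδpos
    have h1δ : (0:ℝ) < 1 - δ := by linarith
    set c : ℝ := (1 - δ) ^ θ with hcdef
    have hc0 : 0 < c := Real.rpow_pos_of_pos h1δ θ
    have hcub : c⁻¹ ≤ 1 + η₁ := by
      have := abs_lt.mp hδci
      linarith [this.2]
    have hclb : 1 - η₁ ≤ c := by
      have := abs_lt.mp hδc
      linarith [this.1]
    have hcub2 : c ≤ 1 + η₁ := by
      have := abs_lt.mp hδc
      linarith [this.2]
    have hrpowneg : (1 - δ) ^ (-θ) = c⁻¹ := by
      rw [hcdef, ← Real.rpow_neg h1δ.le, Real.rpow_neg h1δ.le]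
    set ρ : ℝ := η / 4 * δ ^ θ with hρdef
    have hδθ : (0:ℝ) < δ ^ θ := Real.rpow_pos_of_pos hδpos θ
    have hρpos : 0 < ρ := _root_.mul_pos (by linarith) hδθ
    have hδρ : δ ^ (-θ) * ρ = η / 4 := by
      rw [hρdef, Real.rpow_neg hδpos.le]
      field_simp
    have hδnegpos : (0:ℝ) < δ ^ (-θ) := Real.rpow_pos_of_pos hδpos (-θ)
    filter_upwards [hrem' ρ hρpos, hM', hA0, self_mem_nhdsWithin] with ε hgρ hAub hA0' hεpos
    have hfe_lt : ∀ᶠ lam in l, fe ε lam < A ε + η / 4 :=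
      (hmain' ε hεpos).eventually_lt_const (by linarith)
    have hfe_gt : ∀ᶠ lam in l, A ε - η / 4 < fe ε lam :=
      (hmain' ε hεpos).eventually_const_lt (by linarith)
    have E1 : ∀ᶠ lam in l, fe ε ((1 - δ) * lam) < A ε + η / 4 := hscale _ h1δ _ hfe_lt
    have E2 : ∀ᶠ lam in l, g ε (δ * lam) < ρ := hscale _ hδpos _ hgρ
    have upper : ∀ᶠ lam in l, f lam - A ε ≤ η := by
      filter_upwards [E1, E2, self_mem_nhdsWithin] with lam h1 h2 hpos
      have hk := key_ineq (Ke ε) (Ke' ε) (hcpt ε hεpos).1 (hcpt ε hεpos).2 hθ hδpos hδ1 hpos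
      rw [← hsplit ε hεpos, hrpowneg] at hk
      have e1 : ((1 - δ) * lam) ^ θ * (svCount (Ke ε) ((1 - δ) * lam) : ℝ)
          = fe ε ((1 - δ) * lam) := rfl
      have e2 : ((δ : ℝ) * lam) ^ θ * (svCount (Ke' ε) (δ * lam) : ℝ) = g ε (δ * lam) := rfl
      rw [e1, e2, show lam ^ θ * (svCount K lam : ℝ) = f lam from rfl] at hk
      have hb1 : c⁻¹ * fe ε ((1 - δ) * lam) ≤ (1 + η₁) * (A ε + η / 4) := by
        have hfe0 : 0 ≤ fe ε ((1 - δ) * lam) := by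
          have hp : (0:ℝ) < (1 - δ) * lam := mul_pos h1δ hpos
          have : (0:ℝ) ≤ ((1 - δ) * lam) ^ θ := (Real.rpow_pos_of_pos hp θ).le
          rw [← e1]; positivity
        calc c⁻¹ * fe ε ((1 - δ) * lam) ≤ (1 + η₁) * fe ε ((1 - δ) * lam) :=
              mul_le_mul_of_nonneg_right hcub hfe0
          _ ≤ (1 + η₁) * (A ε + η / 4) := by
              apply mul_le_mul_of_nonneg_left h1.le; linarith
      have hb2 : δ ^ (-θ) * g ε (δ * lam) ≤ η / 4 := by
        rw [← hδρ]
        apply mul_le_mul_of_nonneg_left h2.le hδnegpos.le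
      have hAB : A ε + η / 4 ≤ B := by rw [hBdef]; linarith
      have hη₁A : η₁ * (A ε + η / 4) ≤ η / 4 := by
        calc η₁ * (A ε + η / 4) ≤ η₁ * B := by
              apply mul_le_mul_of_nonneg_left hAB hη₁pos.le
          _ = η / 4 := hη₁B
      have hexp : (1 + η₁) * (A ε + η / 4) = (A ε + η / 4) + η₁ * (A ε + η / 4) := by ring
      linarith [hk, hb1, hb2, hη₁A, hexp]
    have lower : ∀ᶠ lam in l, A ε - f lam ≤ η := by
      have lower' : ∀ᶠ lam in l, A ε - f ((1 - δ) * lam) ≤ η := by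
        filter_upwards [hfe_gt, E2, self_mem_nhdsWithin] with lam h1 h2 hpos
        have hsum : K + -(Ke' ε) = Ke ε := by rw [hsplit ε hεpos]; abel
        have hk := key_ineq K (-(Ke' ε)) hK ((hcpt ε hεpos).2.neg) hθ hδpos hδ1 hpos
        rw [hsum, svCount_neg, hrpowneg] at hk
        have e1 : ((1 - δ) * lam) ^ θ * (svCount K ((1 - δ) * lam) : ℝ)
            = f ((1 - δ) * lam) := rfl
        have e2 : ((δ : ℝ) * lam) ^ θ * (svCount (Ke' ε) (δ * lam) : ℝ) = g ε (δ * lam) := rfl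
        rw [e1, e2, show lam ^ θ * (svCount (Ke ε) lam : ℝ) = fe ε lam from rfl] at hk
        -- hk : fe ε lam ≤ c⁻¹ * f ((1-δ)lam) + δ^(-θ) * g ε (δ lam)
        have hb2 : δ ^ (-θ) * g ε (δ * lam) ≤ η / 4 := by
          rw [← hδρ]
          apply mul_le_mul_of_nonneg_left h2.le hδnegpos.le
        -- c⁻¹ * f(...) ≥ A ε - η/2
        have h3 : A ε - η / 2 ≤ c⁻¹ * f ((1 - δ) * lam) := by linarith
        have h4 : c * (A ε - η / 2) ≤ f ((1 - δ) * lam) := by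
          have := mul_le_mul_of_nonneg_left h3 hc0.le
          rw [← mul_assoc, mul_inv_cancel₀ hc0.ne', one_mul] at this
          exact this
        -- c * x ≥ x - η/4 when |x| ≤ B, |1 - c| ≤ η₁
        have hxB : |A ε - η / 2| ≤ B := by
          rw [abs_le, hBdef]; constructor <;> linarith
        have h5 : (1 - c) * (A ε - η / 2) ≤ η / 4 := by
          calc (1 - c) * (A ε - η / 2) ≤ |(1 - c) * (A ε - η / 2)| := le_abs_self _
            _ = |1 - c| * |A ε - η / 2| := abs_mul _ _
            _ ≤ η₁ * B := by
                apply mul_le_mul _ hxB (abs_nonneg _) hη₁pos.le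
                rw [abs_sub_comm]; exact hδc.le
            _ = η / 4 := hη₁B
        have hexp : c * (A ε - η / 2) = (A ε - η / 2) - (1 - c) * (A ε - η / 2) := by ring
        linarith [h4, h5, hexp]
      have hinv : (0:ℝ) < (1 - δ)⁻¹ := inv_pos.mpr h1δ
      have := hscale _ hinv _ lower'
      refine this.mono fun lam h => ?_
      rwa [show (1 - δ) * ((1 - δ)⁻¹ * lam) = lam by field_simp] at h
    filter_upwards [upper, lower] with lam h1 h2
    rw [abs_le]; constructor <;> linarith
  -- A is Cauchy
  haveI : l.NeBot := by rw [hl]; infer_instance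
  have hCauchy : Cauchy (map A l) := by
    rw [cauchy_map_iff]
    refine ⟨inferInstance, ?_⟩
    refine Metric.uniformity_basis_dist.tendsto_right_iff.mpr ?_
    intro η hη
    have h3 := claim (η / 3) (by linarith)
    have hprod := Filter.Eventually.prod_mk h3 h3
    filter_upwards [hprod] with p hp
    obtain ⟨lam, h1, h2⟩ := (hp.1.and hp.2).exists
    show dist (A p.1) (A p.2) < η
    rw [Real.dist_eq]
    have habs1 := abs_le.mp h1
    have habs2 := abs_le.mp h2
    rw [abs_lt]; constructor <;> linarith
  obtain ⟨Alim, hAlim⟩ := CompleteSpace.complete hCauchy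
  have hAlim : Tendsto A l (𝓝 Alim) := hAlim
  refine ⟨Alim, hAlim, ?_⟩
  rw [Metric.tendsto_nhds]
  intro η hη
  have h3 := claim (η / 3) (by linarith)
  have h4 : ∀ᶠ ε in l, dist (A ε) Alim < η / 3 :=
    Metric.tendsto_nhds.mp hAlim (η / 3) (by linarith)
  obtain ⟨ε, hc1, hc2⟩ := (h3.and h4).exists
  filter_upwards [hc1] with lam hlam
  rw [Real.dist_eq] at hc2 ⊢
  have habs1 := abs_le.mp hlam
  have habs2 := abs_lt.mp hc2
  rw [abs_lt]; constructor <;> linarith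
end
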